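/- Let X be a non-discrete locally compact Hausdorff space and V a non-trivial (nonzero) metrizable topological vector space over ℝ. If X is σ-compact and non-compact, or more generally if X is not pseudocompact, then the colimit space topology on C_cpt(X, V) = ⋃_{K compact} C_K(X, V) (the finest topology making each inclusion C_K(X, V) → C_cpt(X, V) continuous, where C_K(X, V) is the group of continuous maps X → V with support in K, with the topology of uniform convergence) is not a group topology; that is, the family {C_K(X, V)}_{K compact} does not satisfy ACP. -/

import Mathlib

open TopologicalSpace

variable (X : Type*) [TopologicalSpace X] [T2Space X] [LocallyCompactSpace X]
variable (V : Type*) [AddCommGroup V] [Module ℝ V] [TopologicalSpace V]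
  [IsTopologicalAddGroup V] [ContinuousSMul ℝ V]

/-- The group (under pointwise addition) of continuous compactly supported `V`-valued maps on
`X`; the support of `f` is the closure of `{x | f x ≠ 0}`. -/
def CcptAdd : AddSubgroup (X → V) where
  carrier := {f | Continuous f ∧ IsCompact (closure {x | f x ≠ 0})}
  zero_mem' := by
    refine ⟨continuous_const, ?_⟩
    have : {x : X | (0 : X → V) x ≠ 0} = ∅ := by ext x; simp
    rw [this, closure_empty]
    exact isCompact_empty
  add_mem' := by
    rintro f g ⟨hfc, hfk⟩ ⟨hgc, hgk⟩
    refine ⟨hfc.add hgc, ?_⟩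
    refine (hfk.union hgk).of_isClosed_subset isClosed_closure ?_
    rw [← closure_union]
    refine closure_mono fun x hx => ?_
    by_contra hc
    simp only [Set.mem_union, Set.mem_setOf_eq, not_or, not_not] at hc
    exact hx (by simp [Pi.add_apply, hc.1, hc.2])
  neg_mem' := by
    rintro f ⟨hfc, hfk⟩
    refine ⟨hfc.neg, ?_⟩
    have : {x : X | (-f) x ≠ 0} = {x | f x ≠ 0} := by
      ext x; simp [Pi.neg_apply, neg_eq_zero]
    rw [this]
    exact hfk

/-- The subgroup `C_K(X, V)` of continuous maps with support contained in `K`, as a subset. -/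
def CKset (K : Set X) : Set (X → V) := {f | Continuous f ∧ closure {x | f x ≠ 0} ⊆ K}

theorem CKset_subset_Ccpt (K : Set X) (hK : IsCompact K) :
    CKset X V K ⊆ (CcptAdd X V : Set (X → V)) := fun f hf =>
  ⟨hf.1, hK.of_isClosed_subset isClosed_closure hf.2⟩

/-- The topology of uniform convergence on `C_K(X, V)` (with respect to the canonical uniform
structure of the topological vector space `V`). -/
noncomputable def tCK (K : Set X) : TopologicalSpace (CKset X V K) :=
  letI : UniformSpace V := IsTopologicalAddGroup.rightUniformSpace V
  TopologicalSpace.induced (fun f => UniformFun.ofFun (f : X → V))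
    (UniformFun.topologicalSpace X V)

/-- The colimit space topology on `C_cpt(X, V) = ⋃_K C_K(X, V)`: the finest topology making
each inclusion `C_K(X, V) → C_cpt(X, V)` continuous. -/
noncomputable def TccptColim : TopologicalSpace (CcptAdd X V) :=
  ⨆ (K : Set X) (hK : IsCompact K),
    TopologicalSpace.coinduced (Set.inclusion (CKset_subset_Ccpt X V K hK)) (tCK X V K)

open Filter Function Set Topology
open scoped ENNReal UniformConvergence

/-!
Measure sizes in `V` by a metric `d` inducing its group uniformity, with `|v| = d(v, 0)`.
Since `X` is not discrete, a compact `Q` contains pairwise disjoint nonempty open pockets `O k`;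
since `X` is not pseudocompact, there are nonempty open sets `G i` that eventually miss every
compact set. Call `f` an `(i, k)`-signal if `sup_{O k} |f| ≥ 4 · 2⁻ⁱ`, `|f| ≤ 2⁻ⁱ` on all other
pockets, and `sup_{G i} |f| ≥ 2⁻ᵏ`.

The maps that are no signal form a neighbourhood `U` of `0` in the colimit topology. On
`C_K(X, V)` only the finitely many `i` with `G i` meeting `K` matter, and for each of them one
radius works for all `k` at once: if `f` has two pockets with `sup |f| > 2 · 2⁻ⁱ`, every map near
`f` violates the quietness condition, and otherwise all but one `k` fail the first condition
near `f`. Yet no neighbourhood `N` of `0` has `N + N ⊆ U`: the trace of `N` on `C_Q(X, V)`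
contains the bumps with values in `[0, 1] • w` for some `w ≠ 0`; choose `i` with `4 · 2⁻ⁱ < |w|`,
then a bump `b ∈ N` on `G i` of height `w'`, then `k` with `2⁻ᵏ < |w'|`, and only then a bump
`a ∈ N` of height `w` on the pocket `O k`. Now `a + b` is an `(i, k)`-signal.
-/

section Signals

variable {α E : Type*} [PseudoEMetricSpace E] [Zero E]

noncomputable def sizeOn (A : Set α) (f : α → E) : ℝ≥0∞ := ⨆ x ∈ A, edist (f x) 0

theorem edist_le_sizeOn {A : Set α} {f : α → E} {x : α} (hx : x ∈ A) :
    edist (f x) 0 ≤ sizeOn A f :=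
  le_iSup₂ (f := fun x _ => edist (f x) 0) x hx

theorem sizeOn_mono {A B : Set α} (h : A ⊆ B) (f : α → E) : sizeOn A f ≤ sizeOn B f :=
  biSup_mono h

theorem sizeOn_eq_zero {A : Set α} {f : α → E} (h : EqOn f 0 A) : sizeOn A f = 0 :=
  nonpos_iff_eq_zero.1 <| iSup₂_le fun x hx => by simp [h hx]

theorem sizeOn_le_add_edist (A : Set α) (f g : α →ᵤ E) :
    sizeOn A (UniformFun.toFun f) ≤ sizeOn A (UniformFun.toFun g) + edist f g :=
  iSup₂_le fun x hx => calc
    edist (UniformFun.toFun f x) 0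
      ≤ edist (UniformFun.toFun f x) (UniformFun.toFun g x) + edist (UniformFun.toFun g x) 0 :=
      edist_triangle _ _ _
    _ ≤ edist f g + sizeOn A (UniformFun.toFun g) :=
      add_le_add UniformFun.edist_eval_le (edist_le_sizeOn hx)
    _ = sizeOn A (UniformFun.toFun g) + edist f g := add_comm _ _

theorem continuous_sizeOn (A : Set α) :
    Continuous fun f : α →ᵤ E => sizeOn A (UniformFun.toFun f) :=
  continuous_of_le_add_edist 1 ENNReal.one_ne_top fun f g => by
    simpa using sizeOn_le_add_edist A f g

def Signals (O G : ℕ → Set α) (i k : ℕ) (f : α → E) : Prop :=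
  4 * 2⁻¹ ^ i ≤ sizeOn (O k) f ∧ sizeOn (⋃ (m) (_ : m ≠ k), O m) f ≤ 2⁻¹ ^ i ∧
    2⁻¹ ^ k ≤ sizeOn (G i) f

theorem inv_two_pow_pos (n : ℕ) : 0 < (2⁻¹ : ℝ≥0∞) ^ n :=
  ENNReal.pow_pos (ENNReal.inv_pos.2 ENNReal.ofNat_ne_top) n

variable (O G : ℕ → Set α)

theorem isClosed_setOf_signals (i k : ℕ) :
    IsClosed {f : α →ᵤ E | Signals O G i k (UniformFun.toFun f)} :=
  (isClosed_le continuous_const (continuous_sizeOn _)).inter <|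
    (isClosed_le (continuous_sizeOn _) continuous_const).inter
      (isClosed_le continuous_const (continuous_sizeOn _))

theorem not_signals_of_sizeOn_le {i k : ℕ} {f g : α →ᵤ E}
    (hf : sizeOn (O k) (UniformFun.toFun f) ≤ 2 * 2⁻¹ ^ i) (hfg : edist g f ≤ 2⁻¹ ^ i) :
    ¬Signals O G i k (UniformFun.toFun g) := fun h => by
  have : 4 * 2⁻¹ ^ i ≤ 3 * (2⁻¹ : ℝ≥0∞) ^ i := calc
    4 * 2⁻¹ ^ i ≤ sizeOn (O k) (UniformFun.toFun g) := h.1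
    _ ≤ sizeOn (O k) (UniformFun.toFun f) + edist g f := sizeOn_le_add_edist _ g f
    _ ≤ 2 * 2⁻¹ ^ i + 2⁻¹ ^ i := add_le_add hf hfg
    _ = 3 * 2⁻¹ ^ i := by ring
  exact absurd this
    (not_le.2 ((ENNReal.mul_lt_mul_iff_left (inv_two_pow_pos i).ne' (by simp)).2 (by norm_num)))

theorem not_signals_of_two_lt_sizeOn {i k₀ k₁ : ℕ} (hk : k₀ ≠ k₁) {f g : α →ᵤ E}
    (h₀ : 2 * 2⁻¹ ^ i < sizeOn (O k₀) (UniformFun.toFun f))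
    (h₁ : 2 * 2⁻¹ ^ i < sizeOn (O k₁) (UniformFun.toFun f)) (hfg : edist f g ≤ 2⁻¹ ^ i)
    (k : ℕ) : ¬Signals O G i k (UniformFun.toFun g) := fun h => by
  obtain ⟨k', hk', hloud⟩ : ∃ k' ≠ k, 2 * 2⁻¹ ^ i < sizeOn (O k') (UniformFun.toFun f) := by
    rcases eq_or_ne k₀ k with rfl | h
    · exact ⟨k₁, hk.symm, h₁⟩
    · exact ⟨k₀, h, h₀⟩
  refine (calc
    sizeOn (O k') (UniformFun.toFun f) ≤ sizeOn (O k') (UniformFun.toFun g) + edist f g :=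
      sizeOn_le_add_edist _ f g
    _ ≤ sizeOn (⋃ (m) (_ : m ≠ k), O m) (UniformFun.toFun g) + 2⁻¹ ^ i :=
      add_le_add (sizeOn_mono (subset_biUnion_of_mem hk') _) hfg
    _ ≤ 2⁻¹ ^ i + 2⁻¹ ^ i := add_le_add_left h.2.1 _
    _ = 2 * 2⁻¹ ^ i := (two_mul _).symm).not_gt hloud

theorem eventually_forall_not_signals {i : ℕ} {f : α →ᵤ E}
    (hf : ∀ k, ¬Signals O G i k (UniformFun.toFun f)) :
    ∀ᶠ g in 𝓝 f, ∀ k, ¬Signals O G i k (UniformFun.toFun g) := by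
  have hball : ∀ᶠ g in 𝓝 f, edist g f ≤ 2⁻¹ ^ i :=
    Metric.closedEBall_mem_nhds f (inv_two_pow_pos i)
  by_cases hloud : ∃ k₀, 2 * 2⁻¹ ^ i < sizeOn (O k₀) (UniformFun.toFun f)
  · obtain ⟨k₀, hk₀⟩ := hloud
    by_cases hsecond : ∃ k₁ ≠ k₀, 2 * 2⁻¹ ^ i < sizeOn (O k₁) (UniformFun.toFun f)
    · obtain ⟨k₁, hne, hk₁⟩ := hsecond
      filter_upwards [hball] with g hg using
        not_signals_of_two_lt_sizeOn O G hne.symm hk₀ hk₁ (edist_comm f g ▸ hg)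
    · push Not at hsecond
      filter_upwards [hball, (isClosed_setOf_signals O G i k₀).isOpen_compl.mem_nhds (hf k₀)]
        with g hg hg₀ k
      rcases eq_or_ne k k₀ with rfl | hk
      · exact hg₀
      · exact not_signals_of_sizeOn_le O G (hsecond k hk) hg
  · push Not at hloud
    filter_upwards [hball] with g hg k using not_signals_of_sizeOn_le O G (hloud k) hg

theorem eventually_forall_not_signals_of_support_subset {K : Set α}
    (hGK : ∀ᶠ i in atTop, Disjoint (G i) K) {f : α →ᵤ E}
    (hf : ∀ i k, ¬Signals O G i k (UniformFun.toFun f)) :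
    ∀ᶠ g in 𝓝 f, support (UniformFun.toFun g) ⊆ K →
      ∀ i k, ¬Signals O G i k (UniformFun.toFun g) := by
  rw [← Nat.cofinite_eq_atTop, eventually_cofinite] at hGK
  filter_upwards [hGK.eventually_all.2 fun i _ => eventually_forall_not_signals O G (hf i)]
    with g hg hgK i k
  by_cases hi : Disjoint (G i) K
  · intro h
    have hzero : sizeOn (G i) (UniformFun.toFun g) = 0 := sizeOn_eq_zero fun x hx =>
      notMem_support.1 fun hgx => hi.notMem_of_mem_left hx (hgK hgx)
    exact (inv_two_pow_pos k).not_ge (hzero ▸ h.2.2)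
  · exact hg i hi k

theorem signals_of_le_edist {f : α → E} {i k : ℕ} {x y : α} (hy : y ∈ O k)
    (hfy : 4 * 2⁻¹ ^ i ≤ edist (f y) 0) (hquiet : EqOn f 0 (⋃ (m) (_ : m ≠ k), O m))
    (hx : x ∈ G i) (hfx : 2⁻¹ ^ k ≤ edist (f x) 0) : Signals O G i k f :=
  ⟨hfy.trans (edist_le_sizeOn hy), (sizeOn_eq_zero hquiet).trans_le zero_le,
    hfx.trans (edist_le_sizeOn hx)⟩

end Signals

theorem signals_smul_add_smul {α E : Type*} [TopologicalSpace α] [AddCommMonoid E] [Module ℝ E]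
    [PseudoEMetricSpace E] (O G : ℕ → Set α) {Q : Set α} (hOQ : ∀ n, O n ⊆ Q)
    (hOd : Pairwise (Disjoint on O)) {i k : ℕ} (hGQ : Disjoint (G i) Q) {φ χ : α → ℝ}
    (hφO : tsupport φ ⊆ O k) (hχG : tsupport χ ⊆ G i) {x y : α} (hy : y ∈ O k) (hφy : φ y = 1)
    (hx : x ∈ G i) (hχx : χ x = 1) {w w' : E} (hw : 4 * 2⁻¹ ^ i ≤ edist w 0)
    (hw' : 2⁻¹ ^ k ≤ edist w' 0) : Signals O G i k fun z => φ z • w + χ z • w' := by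
  have hφ : ∀ z ∉ O k, φ z = 0 := fun z hz => image_eq_zero_of_notMem_tsupport fun h => hz (hφO h)
  have hχ : ∀ z ∈ Q, χ z = 0 := fun z hz =>
    image_eq_zero_of_notMem_tsupport fun h => hGQ.notMem_of_mem_left (hχG h) hz
  refine signals_of_le_edist O G hy ?_ (fun z hz => ?_) hx ?_
  · simpa [hφy, hχ y (hOQ k hy)] using hw
  · obtain ⟨m, hm, hzm⟩ := mem_iUnion₂.1 hz
    simp [hφ z ((hOd hm.symm).notMem_of_mem_right hzm), hχ z (hOQ m hzm)]
  · simpa [hχx, hφ x fun h => hGQ.notMem_of_mem_left hx (hOQ k h)] using hw'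

theorem IsOpen.exists_seq_pairwise_disjoint {α : Type*} [TopologicalSpace α] [T2Space α]
    {W : Set α} (hW : IsOpen W) (hinf : W.Infinite) :
    ∃ O : ℕ → Set α, (∀ n, IsOpen (O n)) ∧ (∀ n, (O n).Nonempty) ∧ (∀ n, O n ⊆ W) ∧
      Pairwise (Disjoint on O) := by
  have _ := hinf.to_subtype
  obtain ⟨U, hUinf, hUo, hUd⟩ := exists_seq_infinite_isOpen_pairwise_disjoint W
  refine ⟨fun n => (↑) '' U n, fun n => hW.isOpenMap_subtype_val _ (hUo n),
    fun n => (hUinf n).nonempty.image _, fun n => Subtype.coe_image_subset _ _,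
    fun m n hmn => (hUd hmn).image Subtype.val_injective.injOn (subset_univ _) (subset_univ _)⟩

theorem exists_seq_isOpen_pairwise_disjoint_subset_isCompact {α : Type*} [TopologicalSpace α]
    [T2Space α] [WeaklyLocallyCompactSpace α] (h : ¬DiscreteTopology α) :
    ∃ Q : Set α, IsCompact Q ∧ ∃ O : ℕ → Set α, (∀ n, IsOpen (O n)) ∧ (∀ n, (O n).Nonempty) ∧
      (∀ n, O n ⊆ Q) ∧ Pairwise (Disjoint on O) := by
  obtain ⟨p, hp⟩ : ∃ p : α, (𝓝[≠] p).NeBot := by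
    simpa [discreteTopology_iff_nhds_ne, ← neBot_iff] using h
  obtain ⟨Q, hQ, hpQ⟩ := exists_compact_mem_nhds p
  obtain ⟨O, hOo, hOne, hOQ, hOd⟩ := isOpen_interior.exists_seq_pairwise_disjoint
    (infinite_of_mem_nhds p (interior_mem_nhds.2 hpQ))
  exact ⟨Q, hQ, O, hOo, hOne, fun n => (hOQ n).trans interior_subset, hOd⟩

theorem exists_seq_isOpen_eventually_disjoint_of_not_compactSpace {α : Type*}
    [TopologicalSpace α] [T2Space α] [WeaklyLocallyCompactSpace α] [SigmaCompactSpace α]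
    (h : ¬CompactSpace α) :
    ∃ G : ℕ → Set α, (∀ i, IsOpen (G i)) ∧ (∀ i, (G i).Nonempty) ∧
      ∀ K, IsCompact K → ∀ᶠ i in atTop, Disjoint (G i) K := by
  let E := CompactExhaustion.choice α
  refine ⟨fun i => (E i)ᶜ, fun i => (E.isCompact i).isClosed.isOpen_compl, fun i => ?_,
    fun K hK => ?_⟩
  · rw [nonempty_compl]
    exact fun hEi => h ⟨hEi ▸ E.isCompact i⟩
  · obtain ⟨m, hm⟩ := E.exists_superset_of_isCompact hK
    exact eventually_atTop.2
      ⟨m, fun i hi => disjoint_compl_left_iff_subset.2 (hm.trans (E.subset hi))⟩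

theorem exists_seq_isOpen_eventually_disjoint_of_unbounded {α : Type*} [TopologicalSpace α]
    {h : α → ℝ} (hc : Continuous h) (hub : ¬∃ B : ℝ, ∀ x, |h x| ≤ B) :
    ∃ G : ℕ → Set α, (∀ i, IsOpen (G i)) ∧ (∀ i, (G i).Nonempty) ∧
      ∀ K, IsCompact K → ∀ᶠ i in atTop, Disjoint (G i) K := by
  refine ⟨fun i => {x | i < |h x|}, fun i => isOpen_lt continuous_const hc.abs, fun i => ?_,
    fun K hK => ?_⟩
  · push Not at hub
    exact hub i
  · obtain ⟨C, hC⟩ := hK.exists_bound_of_continuousOn hc.continuousOn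
    filter_upwards [tendsto_natCast_atTop_atTop.eventually_ge_atTop C] with i hi
    exact disjoint_left.2 fun x hx hxK => (hx.trans_le ((hC x hxK).trans hi)).false

theorem exists_emetricSpace_eq_rightUniformSpace {E : Type*} [AddCommGroup E]
    [TopologicalSpace E] [IsTopologicalAddGroup E] [MetrizableSpace E] :
    ∃ m : EMetricSpace E, IsTopologicalAddGroup.rightUniformSpace E = m.toUniformSpace := by
  let _ := IsTopologicalAddGroup.rightUniformSpace E
  have _ := isUniformAddGroup_of_addCommGroup (G := E)
  have _ := IsUniformAddGroup.uniformity_countably_generated (α := E)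
  exact ⟨(UniformSpace.metricSpace E).toEMetricSpace, rfl⟩

theorem exists_ne_zero_smul_mem {E : Type*} [AddCommGroup E] [Module ℝ E] [TopologicalSpace E]
    [ContinuousSMul ℝ E] [Nontrivial E] {N : Set E} (hN : N ∈ 𝓝 (0 : E)) :
    ∃ w ≠ (0 : E), ∀ s ∈ Icc (0 : ℝ) 1, s • w ∈ N := by
  obtain ⟨v, hv⟩ := exists_ne (0 : E)
  have hsmall : ∀ᶠ t in 𝓝[≠] (0 : ℝ), t • v ∈ balancedCore ℝ N :=
    ((continuous_id.smul continuous_const).tendsto' (0 : ℝ) 0 (zero_smul ℝ v)).mono_left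
      nhdsWithin_le_nhds (balancedCore_mem_nhds_zero hN)
  obtain ⟨t, ht, ht0⟩ := (hsmall.and self_mem_nhdsWithin).exists
  refine ⟨t • v, smul_ne_zero ht0 hv, fun s hs => balancedCore_subset N <|
    (balancedCore_balanced N).smul_mem ?_ ht⟩
  rw [Real.norm_eq_abs, abs_le]
  exact ⟨by linarith [hs.1], hs.2⟩

theorem smul_const_mem_CKset {α E : Type*} [TopologicalSpace α] [AddCommGroup E] [Module ℝ E]
    [TopologicalSpace E] [ContinuousSMul ℝ E] {K : Set α} {φ : C(α, ℝ)} (hφ : tsupport φ ⊆ K)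
    (w : E) : (fun x => φ x • w) ∈ CKset α E K :=
  ⟨φ.continuous.smul continuous_const,
    (closure_mono (support_smul_subset_left (fun x => φ x) fun _ => w)).trans hφ⟩

theorem tCK_eq_induced {α E : Type*} [TopologicalSpace α] [AddCommGroup E] [TopologicalSpace E]
    [IsTopologicalAddGroup E] [PseudoEMetricSpace E]
    (hE : IsTopologicalAddGroup.rightUniformSpace E = PseudoEMetricSpace.toUniformSpace)
    (K : Set α) :
    tCK α E K = induced (fun f : CKset α E K => UniformFun.ofFun (f : α → E)) inferInstance := by
  rw [tCK, hE]

section Colimit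

variable {X V}

theorem isOpen_TccptColim_iff {U : Set (CcptAdd X V)} :
    IsOpen[TccptColim X V] U ↔ ∀ K (hK : IsCompact K),
      IsOpen[tCK X V K] (Set.inclusion (CKset_subset_Ccpt X V K hK) ⁻¹' U) := by
  rw [TccptColim]
  simp only [isOpen_iSup_iff, isOpen_coinduced]

theorem continuous_inclusion_CKset {K : Set X} (hK : IsCompact K) :
    Continuous[tCK X V K, TccptColim X V] (Set.inclusion (CKset_subset_Ccpt X V K hK)) :=
  continuous_iff_coinduced_le.2 <| le_iSup₂ (f := fun K hK =>
    coinduced (Set.inclusion (CKset_subset_Ccpt X V K hK)) (tCK X V K)) K hK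

theorem isOpen_setOf_forall_not_signals [PseudoEMetricSpace V]
    (hV : IsTopologicalAddGroup.rightUniformSpace V = PseudoEMetricSpace.toUniformSpace)
    (O G : ℕ → Set X) (hG : ∀ K, IsCompact K → ∀ᶠ i in atTop, Disjoint (G i) K) :
    IsOpen[TccptColim X V] {F | ∀ i k, ¬Signals O G i k (F : X → V)} := by
  refine isOpen_TccptColim_iff.2 fun K hK => ?_
  rw [tCK_eq_induced hV, @isOpen_iff_mem_nhds]
  intro f hf
  rw [nhds_induced]
  exact ((eventually_forall_not_signals_of_support_subset O G (hG K hK) hf).comap _).mono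
    fun g hg => hg (subset_closure.trans g.2.2)

theorem exists_nhds_zero_forall_mem [PseudoEMetricSpace V]
    (hV : IsTopologicalAddGroup.rightUniformSpace V = PseudoEMetricSpace.toUniformSpace)
    {N : Set (CcptAdd X V)} (hN : N ∈ @nhds _ (TccptColim X V) 0) {K : Set X}
    (hK : IsCompact K) :
    ∃ W ∈ 𝓝 (0 : V), ∀ f (hf : f ∈ CKset X V K), (∀ x, f x ∈ W) →
      (⟨f, CKset_subset_Ccpt X V K hK hf⟩ : CcptAdd X V) ∈ N := by
  have h0 : (0 : X → V) ∈ CKset X V K := ⟨continuous_const, by simp⟩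
  have hpre : Set.inclusion (CKset_subset_Ccpt X V K hK) ⁻¹' N ∈ @nhds _ (tCK X V K) ⟨0, h0⟩ := by
    let _ := TccptColim X V
    let _ := tCK X V K
    exact (continuous_inclusion_CKset hK).continuousAt.preimage_mem_nhds hN
  rw [tCK_eq_induced hV, nhds_induced, mem_comap] at hpre
  obtain ⟨T, hT, hTN⟩ := hpre
  obtain ⟨ε, hε, hεT⟩ := EMetric.mem_nhds_iff.1 hT
  obtain ⟨r, hr, hrε⟩ := exists_between hε
  refine ⟨Metric.closedEBall 0 r, ?_, fun f hf hfW => @hTN ⟨f, hf⟩ (hεT ?_)⟩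
  · have hτ : ‹TopologicalSpace V› = PseudoEMetricSpace.toUniformSpace.toTopologicalSpace :=
      show (IsTopologicalAddGroup.rightUniformSpace V).toTopologicalSpace = _ by rw [hV]
    rw [hτ]
    exact Metric.closedEBall_mem_nhds 0 hr
  · exact (UniformFun.edist_le.2 hfW).trans_lt hrε

theorem not_isTopologicalAddGroup_TccptColim [EMetricSpace V]
    (hV : IsTopologicalAddGroup.rightUniformSpace V = PseudoEMetricSpace.toUniformSpace)
    [Nontrivial V] {Q : Set X} (hQ : IsCompact Q) {O : ℕ → Set X} (hOo : ∀ n, IsOpen (O n))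
    (hOne : ∀ n, (O n).Nonempty) (hOQ : ∀ n, O n ⊆ Q) (hOd : Pairwise (Disjoint on O))
    {G : ℕ → Set X} (hGo : ∀ i, IsOpen (G i)) (hGne : ∀ i, (G i).Nonempty)
    (hG : ∀ K, IsCompact K → ∀ᶠ i in atTop, Disjoint (G i) K) :
    ¬@IsTopologicalAddGroup (CcptAdd X V) (TccptColim X V) _ := by
  let _ := TccptColim X V
  intro _
  have hU : {F : CcptAdd X V | ∀ i k, ¬Signals O G i k (F : X → V)} ∈ 𝓝 0 :=
    (isOpen_setOf_forall_not_signals hV O G hG).mem_nhds fun i k h =>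
      (inv_two_pow_pos k).not_ge (h.2.2.trans_eq (sizeOn_eq_zero fun _ _ => rfl))
  obtain ⟨N, hN, hNU⟩ := exists_nhds_zero_half hU
  obtain ⟨WQ, hWQ, hQN⟩ := exists_nhds_zero_forall_mem hV hN hQ
  obtain ⟨w, hw, hwWQ⟩ := exists_ne_zero_smul_mem hWQ
  have h4 : Tendsto (fun i : ℕ => 4 * (2⁻¹ : ℝ≥0∞) ^ i) atTop (𝓝 0) := by
    simpa using ENNReal.Tendsto.const_mul
      (ENNReal.tendsto_pow_atTop_nhds_zero_of_lt_one (r := 2⁻¹) (by norm_num)) (.inr (by simp))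
  obtain ⟨i, hiw, hGQ⟩ :=
    ((h4.eventually (gt_mem_nhds (edist_pos.2 hw))).and (hG Q hQ)).exists
  obtain ⟨x, hx⟩ := hGne i
  obtain ⟨χ, hχx, hχc, hχG, hχ01⟩ := exists_continuousMap_one_of_isCompact_subset_isOpen
    isCompact_singleton (hGo i) (singleton_subset_iff.2 hx)
  obtain ⟨WG, hWG, hGN⟩ := exists_nhds_zero_forall_mem hV hN hχc
  obtain ⟨w', hw', hw'WG⟩ := exists_ne_zero_smul_mem hWG
  obtain ⟨k, hk⟩ := ENNReal.exists_inv_two_pow_lt (edist_pos.2 hw').ne'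
  obtain ⟨y, hy⟩ := hOne k
  obtain ⟨φ, hφy, -, hφO, hφ01⟩ := exists_continuousMap_one_of_isCompact_subset_isOpen
    isCompact_singleton (hOo k) (singleton_subset_iff.2 hy)
  exact hNU _ (hQN _ (smul_const_mem_CKset (hφO.trans (hOQ k)) w) fun z => hwWQ _ (hφ01 z))
    _ (hGN _ (smul_const_mem_CKset subset_rfl w') fun z => hw'WG _ (hχ01 z)) i k
    (signals_smul_add_smul O G hOQ hOd hGQ hφO hχG hy (hφy rfl) hx (hχx rfl) hiw.le hk.le)

end Colimit

/-- Let `X` be a non-discrete locally compact Hausdorff space and `V` a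
non-trivial metrizable topological vector space over `ℝ`. If `X` is σ-compact and non-compact,
or more generally if `X` is not pseudocompact (i.e. admits a continuous unbounded real-valued
function), then the colimit space topology on `C_cpt(X, V)` determined by the subgroups
`C_K(X, V)` (with the topology of uniform convergence) is not a group topology: the family
`{C_K(X, V)}_K` does not satisfy ACP. -/
theorem ccpt_not_ACP_of_not_pseudocompact
    [MetrizableSpace V] [Nontrivial V]
    (hnd : ¬DiscreteTopology X)
    (hX : (SigmaCompactSpace X ∧ ¬CompactSpace X) ∨
      ∃ f : X → ℝ, Continuous f ∧ ¬∃ B : ℝ, ∀ x, |f x| ≤ B) :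
    ¬@IsTopologicalAddGroup (CcptAdd X V) (TccptColim X V) _ := by
  obtain ⟨Q, hQ, O, hOo, hOne, hOQ, hOd⟩ := exists_seq_isOpen_pairwise_disjoint_subset_isCompact hnd
  obtain ⟨G, hGo, hGne, hG⟩ : ∃ G : ℕ → Set X, (∀ i, IsOpen (G i)) ∧ (∀ i, (G i).Nonempty) ∧
      ∀ K, IsCompact K → ∀ᶠ i in atTop, Disjoint (G i) K := by
    rcases hX with ⟨_, hnc⟩ | ⟨f, hf, hub⟩
    · exact exists_seq_isOpen_eventually_disjoint_of_not_compactSpace hnc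
    · exact exists_seq_isOpen_eventually_disjoint_of_unbounded hf hub
  obtain ⟨m, hm⟩ := exists_emetricSpace_eq_rightUniformSpace (E := V)
  let _ := m
  exact not_isTopologicalAddGroup_TccptColim hm hQ hOo hOne hOQ hOd hGo hGne hG
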